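/- Let γ ≥ 1, let (Ω, ℱ, ℙ) be a probability space, and let Q : Ω → S_d^{+} be an integrable random matrix satisfying γ^{−1}·I_d ⪯ Q ⪯ γ·I_d almost surely. Suppose Q* ∈ S_d^{++} satisfies the fixed-point (first-order optimality) equation Q* = E[(Q*^{1/2} Q Q*^{1/2})^{1/2}]. Then γ^{−1}·I_d ⪯ Q* ⪯ γ·I_d. -/

import Mathlib

open MeasureTheory ProbabilityTheory Filter Finset Matrix
open scoped BigOperators ENNReal NNReal Topology

noncomputable section

namespace BWFR

attribute [local instance] Matrix.frobeniusSeminormedAddCommGroup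
  Matrix.frobeniusNormedAddCommGroup Matrix.frobeniusNormedSpace

/-- Euclidean norm on `Fin p → ℝ`. -/
def euclNorm {p : ℕ} (v : Fin p → ℝ) : ℝ := Real.sqrt (∑ k, v k ^ 2)

/-- Frobenius norm of a matrix. -/
def frobNorm {d : ℕ} (A : Matrix (Fin d) (Fin d) ℝ) : ℝ :=
  Real.sqrt (∑ i, ∑ j, A i j ^ 2)

/-- Frobenius inner product. -/
def frobInner {d : ℕ} (A B : Matrix (Fin d) (Fin d) ℝ) : ℝ := ∑ i, ∑ j, A i j * B i j

/-- The positive semidefinite square root of a PSD matrix (junk value `0` otherwise). -/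
def msqrt {d : ℕ} (A : Matrix (Fin d) (Fin d) ℝ) : Matrix (Fin d) (Fin d) ℝ :=
  letI := Classical.propDecidable
  if h : A.PosSemidef then
    h.1.eigenvectorUnitary.1 * diagonal ((↑) ∘ (√·) ∘ h.1.eigenvalues) *
      (star h.1.eigenvectorUnitary : Matrix (Fin d) (Fin d) ℝ)
  else 0

/-- Squared Bures–Wasserstein distance. -/
def BW2 {d : ℕ} (A B : Matrix (Fin d) (Fin d) ℝ) : ℝ :=
  A.trace + B.trace - 2 * (msqrt (msqrt A * B * msqrt A)).trace

/-- Bures–Wasserstein distance. -/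
def BW {d : ℕ} (A B : Matrix (Fin d) (Fin d) ℝ) : ℝ := Real.sqrt (BW2 A B)

/-- The optimal transport map `T_Q^S = S^{1/2} (S^{1/2} Q S^{1/2})^{-1/2} S^{1/2}`. -/
def otMap {d : ℕ} (Q S : Matrix (Fin d) (Fin d) ℝ) : Matrix (Fin d) (Fin d) ℝ :=
  msqrt S * (msqrt (msqrt S * Q * msqrt S))⁻¹ * msqrt S

/-- Smallest eigenvalue of a symmetric matrix, via the quadratic form. -/
def eigMin {m : Type*} [Fintype m] (A : Matrix m m ℝ) : ℝ :=
  sInf {r | ∃ v : m → ℝ, (∑ k, v k ^ 2) = 1 ∧ r = v ⬝ᵥ A.mulVec v}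

/-- Largest eigenvalue of a symmetric matrix, via the quadratic form. -/
def eigMax {m : Type*} [Fintype m] (A : Matrix m m ℝ) : ℝ :=
  sSup {r | ∃ v : m → ℝ, (∑ k, v k ^ 2) = 1 ∧ r = v ⬝ᵥ A.mulVec v}

/-- Strict Loewner order `A ≺ B`. -/
def loewnerLT {d : ℕ} (A B : Matrix (Fin d) (Fin d) ℝ) : Prop := (B - A).PosDef

/-- The set of symmetric matrices. -/
def symmSet (d : ℕ) : Set (Matrix (Fin d) (Fin d) ℝ) := {A | A.IsSymm}

/-- The differential `dT_Q^S` of `Q ↦ T_Q^S` along the set of symmetric matrices. -/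
def dOT {d : ℕ} (S Q : Matrix (Fin d) (Fin d) ℝ) :
    Matrix (Fin d) (Fin d) ℝ →L[ℝ] Matrix (Fin d) (Fin d) ℝ :=
  fderivWithin ℝ (fun R => otMap R S) (symmSet d) Q

def gammaPoly (c C t : ℝ) : ℝ := c * (max t 1) ^ C

section Helpers
variable {d : ℕ}

/-- Square root of a PSD matrix via the spectral decomposition. -/
def _root_.Matrix.PosSemidef.sqrt {A : Matrix (Fin d) (Fin d) ℝ} (hA : A.PosSemidef) :
    Matrix (Fin d) (Fin d) ℝ :=
  hA.1.eigenvectorUnitary.1 *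
    diagonal ((RCLike.ofReal : ℝ → ℝ) ∘ Real.sqrt ∘ hA.1.eigenvalues) *
    (star hA.1.eigenvectorUnitary : Matrix (Fin d) (Fin d) ℝ)

lemma dot_nonneg (x : Fin d → ℝ) : 0 ≤ x ⬝ᵥ x :=
  Finset.sum_nonneg fun i _ => mul_self_nonneg _

lemma qf_nonneg {A : Matrix (Fin d) (Fin d) ℝ} (hA : A.PosSemidef) (x : Fin d → ℝ) :
    0 ≤ x ⬝ᵥ A *ᵥ x := by simpa using hA.dotProduct_mulVec_nonneg x

lemma posSemidef_of_qf {A : Matrix (Fin d) (Fin d) ℝ} (hh : A.IsHermitian)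
    (h : ∀ x : Fin d → ℝ, 0 ≤ x ⬝ᵥ A *ᵥ x) : A.PosSemidef :=
  Matrix.PosSemidef.of_dotProduct_mulVec_nonneg hh fun x => by simpa using h x

lemma smul_one_posSemidef {c : ℝ} (hc : 0 ≤ c) :
    ((c • 1 : Matrix (Fin d) (Fin d) ℝ)).PosSemidef := by
  refine posSemidef_of_qf ?_ fun x => ?_
  · unfold Matrix.IsHermitian
    simp
  · rw [Matrix.smul_mulVec, Matrix.one_mulVec, dotProduct_smul]
    exact mul_nonneg hc (dot_nonneg x)

lemma conj_diag_entry (W : Matrix (Fin d) (Fin d) ℝ) (w : Fin d → ℝ) (k l : Fin d) :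
    (W * diagonal w * star W) k l = ∑ j, W k j * w j * W l j := by
  rw [Matrix.star_eq_conjTranspose, Matrix.mul_apply]
  congr 1; ext j
  rw [Matrix.mul_diagonal, Matrix.conjTranspose_apply]
  simp

lemma row_unit {W : Matrix (Fin d) (Fin d) ℝ} (hW : W * star W = 1) (k : Fin d) :
    ∑ j, W k j ^ 2 = 1 := by
  have := congrFun (congrFun hW k) k
  rw [Matrix.mul_apply] at this
  simp only [Matrix.star_eq_conjTranspose, Matrix.conjTranspose_apply, star_trivial] at this
  simpa [pow_two, Matrix.one_apply] using this

lemma entry_bound {W : Matrix (Fin d) (Fin d) ℝ} (hW : W * star W = 1)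
    {w : Fin d → ℝ} {c : ℝ} (hw : ∀ j, |w j| ≤ c) (k l : Fin d) :
    |(W * diagonal w * star W) k l| ≤ c := by
  have hc : 0 ≤ c := le_trans (abs_nonneg _) (hw ⟨0, by
    rcases Nat.eq_zero_or_pos d with h | h
    · exact absurd (congrFun (congrFun hW k) k) (by subst h; exact k.elim0)
    · exact h⟩)
  rw [conj_diag_entry]
  refine (Finset.abs_sum_le_sum_abs _ _).trans ?_
  have h1 : ∀ j ∈ Finset.univ, |W k j * w j * W l j| ≤ c * (|W k j| * |W l j|) := by
    intro j _
    rw [abs_mul, abs_mul]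
    calc |W k j| * |w j| * |W l j| ≤ |W k j| * c * |W l j| := by
          gcongr; exact hw j
      _ = c * (|W k j| * |W l j|) := by ring
  refine (Finset.sum_le_sum h1).trans ?_
  rw [← Finset.mul_sum]
  have h2 : (∑ j, |W k j| * |W l j|) ≤ 1 := by
    have := Finset.sum_mul_sq_le_sq_mul_sq Finset.univ (fun j => |W k j|) (fun j => |W l j|)
    simp only [sq_abs] at this
    rw [row_unit hW k, row_unit hW l, mul_one] at this
    have h0 : 0 ≤ ∑ j, |W k j| * |W l j| :=
      Finset.sum_nonneg fun j _ => mul_nonneg (abs_nonneg _) (abs_nonneg _)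
    nlinarith
  nlinarith


/-- Real spectral theorem. -/
lemma spectral_real {A : Matrix (Fin d) (Fin d) ℝ} (hA : A.IsHermitian) :
    A = (hA.eigenvectorUnitary : Matrix (Fin d) (Fin d) ℝ) * diagonal hA.eigenvalues *
      star (hA.eigenvectorUnitary : Matrix (Fin d) (Fin d) ℝ) := by
  have h := hA.spectral_theorem
  rwa [show (RCLike.ofReal ∘ hA.eigenvalues : Fin d → ℝ) = hA.eigenvalues by
    funext j; simp [RCLike.ofReal_real_eq_id]] at h

lemma sqrt_spectral {A : Matrix (Fin d) (Fin d) ℝ} (hA : A.PosSemidef) :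
    hA.sqrt = (hA.1.eigenvectorUnitary : Matrix (Fin d) (Fin d) ℝ) *
      diagonal (fun j => Real.sqrt (hA.1.eigenvalues j)) *
      star (hA.1.eigenvectorUnitary : Matrix (Fin d) (Fin d) ℝ) := by
  have h : (RCLike.ofReal ∘ Real.sqrt ∘ hA.1.eigenvalues : Fin d → ℝ)
      = fun j => Real.sqrt (hA.1.eigenvalues j) := by
    funext j
    exact congrFun RCLike.ofReal_real_eq_id _
  rw [Matrix.PosSemidef.sqrt, h]

lemma unit_mul_star {A : Matrix (Fin d) (Fin d) ℝ} (hA : A.IsHermitian) :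
    (hA.eigenvectorUnitary : Matrix (Fin d) (Fin d) ℝ) *
      star (hA.eigenvectorUnitary : Matrix (Fin d) (Fin d) ℝ) = 1 :=
  Matrix.mem_unitaryGroup_iff.mp hA.eigenvectorUnitary.2

lemma star_mul_unit {A : Matrix (Fin d) (Fin d) ℝ} (hA : A.IsHermitian) :
    star (hA.eigenvectorUnitary : Matrix (Fin d) (Fin d) ℝ) *
      (hA.eigenvectorUnitary : Matrix (Fin d) (Fin d) ℝ) = 1 :=
  Matrix.mem_unitaryGroup_iff'.mp hA.eigenvectorUnitary.2

lemma smul_one_eq_diag (c : ℝ) :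
    (c • 1 : Matrix (Fin d) (Fin d) ℝ) = diagonal (fun _ => c) := by
  ext i j
  by_cases h : i = j <;> simp [Matrix.one_apply, Matrix.diagonal_apply, h]

/-- conjugation representation of A - c•1 . -/
lemma conj_sub_smul {A W D : Matrix (Fin d) (Fin d) ℝ} (hW : W * star W = 1)
    (hA : A = W * D * star W) (c : ℝ) :
    A - c • 1 = W * (D - c • 1) * star W := by
  rw [Matrix.mul_sub, Matrix.sub_mul, ← hA]
  congr 1
  rw [show W * (c • 1) = c • W by simp, Matrix.smul_mul, hW]

lemma diagRep_lower {A : Matrix (Fin d) (Fin d) ℝ} (hA : A.IsHermitian) {c : ℝ}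
    (h : ∀ j, c ≤ hA.eigenvalues j) : (A - c • 1).PosSemidef := by
  rw [conj_sub_smul (unit_mul_star hA) (spectral_real hA) c, smul_one_eq_diag,
    Matrix.diagonal_sub, Matrix.star_eq_conjTranspose]
  exact Matrix.PosSemidef.mul_mul_conjTranspose_same
    (Matrix.posSemidef_diagonal_iff.mpr fun j => sub_nonneg.mpr (h j)) _

lemma diagRep_upper {A : Matrix (Fin d) (Fin d) ℝ} (hA : A.IsHermitian) {c : ℝ}
    (h : ∀ j, hA.eigenvalues j ≤ c) : (c • 1 - A).PosSemidef := by
  have key : c • 1 - A = (hA.eigenvectorUnitary : Matrix (Fin d) (Fin d) ℝ) *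
      (c • 1 - diagonal hA.eigenvalues) *
      star (hA.eigenvectorUnitary : Matrix (Fin d) (Fin d) ℝ) := by
    rw [Matrix.mul_sub, Matrix.sub_mul]
    rw [show (hA.eigenvectorUnitary : Matrix (Fin d) (Fin d) ℝ) * (c • 1) =
      c • (hA.eigenvectorUnitary : Matrix (Fin d) (Fin d) ℝ) by simp, Matrix.smul_mul,
      unit_mul_star hA, ← spectral_real hA]
  rw [key, smul_one_eq_diag, Matrix.diagonal_sub, Matrix.star_eq_conjTranspose]
  exact Matrix.PosSemidef.mul_mul_conjTranspose_same
    (Matrix.posSemidef_diagonal_iff.mpr fun j => sub_nonneg.mpr (h j)) _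


lemma basis_dot_self {A : Matrix (Fin d) (Fin d) ℝ} (hA : A.IsHermitian) (j : Fin d) :
    (⇑(hA.eigenvectorBasis j) : Fin d → ℝ) ⬝ᵥ ⇑(hA.eigenvectorBasis j) = 1 := by
  have h := hA.eigenvectorBasis.orthonormal.1 j
  rw [EuclideanSpace.norm_eq] at h
  have h2 : (∑ i, ‖hA.eigenvectorBasis j i‖ ^ 2) = 1 := by
    have hnn : 0 ≤ ∑ i, ‖hA.eigenvectorBasis j i‖ ^ 2 :=
      Finset.sum_nonneg fun i _ => sq_nonneg _
    nlinarith [Real.sq_sqrt hnn]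
  rw [dotProduct]
  refine Eq.trans (Finset.sum_congr rfl fun i _ => ?_) h2
  simp [Real.norm_eq_abs, sq_abs, pow_two]

lemma eigenvalue_qf {A : Matrix (Fin d) (Fin d) ℝ} (hA : A.IsHermitian) (j : Fin d) :
    hA.eigenvalues j = (⇑(hA.eigenvectorBasis j) : Fin d → ℝ) ⬝ᵥ A *ᵥ ⇑(hA.eigenvectorBasis j) := by
  have h := hA.eigenvalues_eq j
  simpa using h

lemma eig_le_of_loewner {A : Matrix (Fin d) (Fin d) ℝ} (hA : A.IsHermitian) {c : ℝ}
    (h : ((c • 1 : Matrix (Fin d) (Fin d) ℝ) - A).PosSemidef) (j : Fin d) :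
    hA.eigenvalues j ≤ c := by
  have h2 := h.dotProduct_mulVec_nonneg (⇑(hA.eigenvectorBasis j))
  simp only [star_trivial, Matrix.sub_mulVec, Matrix.smul_mulVec, Matrix.one_mulVec,
    dotProduct_sub, dotProduct_smul] at h2
  rw [basis_dot_self hA j, ← eigenvalue_qf hA j, smul_eq_mul, mul_one] at h2
  linarith

lemma le_eig_of_loewner {A : Matrix (Fin d) (Fin d) ℝ} (hA : A.IsHermitian) {c : ℝ}
    (h : (A - (c • 1 : Matrix (Fin d) (Fin d) ℝ)).PosSemidef) (j : Fin d) :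
    c ≤ hA.eigenvalues j := by
  have h2 := h.dotProduct_mulVec_nonneg (⇑(hA.eigenvectorBasis j))
  simp only [star_trivial, Matrix.sub_mulVec, Matrix.smul_mulVec, Matrix.one_mulVec,
    dotProduct_sub, dotProduct_smul] at h2
  rw [basis_dot_self hA j, ← eigenvalue_qf hA j, smul_eq_mul, mul_one] at h2
  linarith

/-- If `B` is PSD and `B ⪰ r•1` with `r ≥ 0` then `√B ⪰ √r • 1`. -/
lemma sqrt_loewner {B : Matrix (Fin d) (Fin d) ℝ} (hB : B.PosSemidef) {r : ℝ}
    (h : (B - r • 1).PosSemidef) :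
    (hB.sqrt - Real.sqrt r • 1).PosSemidef := by
  have heig : ∀ j, Real.sqrt r ≤ Real.sqrt (hB.1.eigenvalues j) := fun j =>
    Real.sqrt_le_sqrt (le_eig_of_loewner hB.1 h j)
  have key : hB.sqrt - Real.sqrt r • 1 =
      (hB.1.eigenvectorUnitary : Matrix (Fin d) (Fin d) ℝ) *
      (diagonal (fun j => Real.sqrt (hB.1.eigenvalues j)) - Real.sqrt r • 1) *
      star (hB.1.eigenvectorUnitary : Matrix (Fin d) (Fin d) ℝ) :=
    conj_sub_smul (unit_mul_star hB.1) (sqrt_spectral hB) _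
  rw [key, smul_one_eq_diag, Matrix.diagonal_sub, Matrix.star_eq_conjTranspose]
  exact Matrix.PosSemidef.mul_mul_conjTranspose_same
    (Matrix.posSemidef_diagonal_iff.mpr fun j => sub_nonneg.mpr (heig j)) _


lemma conj_pow {W : Matrix (Fin d) (Fin d) ℝ} (hW1 : W * star W = 1)
    (hW2 : star W * W = 1) (w : Fin d → ℝ) (n : ℕ) :
    (W * diagonal w * star W) ^ n = W * diagonal (fun j => w j ^ n) * star W := by
  induction n with
  | zero => simp [pow_zero, Matrix.diagonal_one, hW1]
  | succ n ih =>
      rw [pow_succ, ih]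
      simp only [Matrix.mul_assoc]
      rw [← Matrix.mul_assoc (star W) W (diagonal w * star W), hW2, Matrix.one_mul,
        ← Matrix.mul_assoc (diagonal fun j => w j ^ n) (diagonal w) (star W),
        Matrix.diagonal_mul_diagonal,
        show (fun i => w i ^ n * w i) = fun j => w j ^ (n + 1) from
          funext fun j => (pow_succ _ _).symm]

lemma _root_.Matrix.PosSemidef.posSemidef_sqrt {A : Matrix (Fin d) (Fin d) ℝ}
    (hA : A.PosSemidef) : hA.sqrt.PosSemidef := by
  rw [sqrt_spectral hA, Matrix.star_eq_conjTranspose]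
  exact Matrix.PosSemidef.mul_mul_conjTranspose_same
    (Matrix.posSemidef_diagonal_iff.mpr fun j => Real.sqrt_nonneg _) _

lemma _root_.Matrix.PosSemidef.sqrt_mul_self {A : Matrix (Fin d) (Fin d) ℝ}
    (hA : A.PosSemidef) : hA.sqrt * hA.sqrt = A := by
  rw [← sq, sqrt_spectral hA, conj_pow (unit_mul_star hA.1) (star_mul_unit hA.1),
    show (fun j => Real.sqrt (hA.1.eigenvalues j) ^ 2) = hA.1.eigenvalues from
      funext fun j => Real.sq_sqrt (hA.eigenvalues_nonneg j)]
  exact (spectral_real hA.1).symm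

/-- Evaluation of a polynomial on a matrix, written with explicit sums. -/
def evalMat (p : Polynomial ℝ) (B : Matrix (Fin d) (Fin d) ℝ) : Matrix (Fin d) (Fin d) ℝ :=
  ∑ i ∈ Finset.range (p.natDegree + 1), p.coeff i • B ^ i

lemma diagonal_sum_comm (s : Finset ℕ) (f : ℕ → Fin d → ℝ) :
    (∑ i ∈ s, diagonal (f i)) = diagonal (fun j => ∑ i ∈ s, f i j) := by
  ext k l
  by_cases h : k = l <;>
    simp [Matrix.sum_apply, Matrix.diagonal_apply, h]

lemma evalMat_conj {W : Matrix (Fin d) (Fin d) ℝ} (hW1 : W * star W = 1)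
    (hW2 : star W * W = 1) (w : Fin d → ℝ) (p : Polynomial ℝ) :
    evalMat p (W * diagonal w * star W) =
      W * diagonal (fun j => p.eval (w j)) * star W := by
  unfold evalMat
  have h1 : ∀ i ∈ Finset.range (p.natDegree + 1),
      p.coeff i • (W * diagonal w * star W) ^ i =
        W * diagonal (fun j => p.coeff i * w j ^ i) * star W := by
    intro i _
    rw [conj_pow hW1 hW2,
      show diagonal (fun j => p.coeff i * w j ^ i)
        = p.coeff i • diagonal (fun j => w j ^ i) by
          ext a b; by_cases h : a = b <;> simp [Matrix.diagonal_apply, h]]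
    simp [Matrix.mul_smul, Matrix.smul_mul]
  rw [Finset.sum_congr rfl h1, ← Matrix.sum_mul, ← Matrix.mul_sum, diagonal_sum_comm,
    show (fun j => ∑ i ∈ Finset.range (p.natDegree + 1), p.coeff i * w j ^ i)
      = fun j => p.eval (w j) from funext fun j => (Polynomial.eval_eq_sum_range _).symm]


lemma herm_transpose {S : Matrix (Fin d) (Fin d) ℝ} (hS : S.IsHermitian) : Sᵀ = S := by
  rw [← Matrix.conjTranspose_eq_transpose_of_trivial]; exact hS

lemma dot_symm_assoc {S : Matrix (Fin d) (Fin d) ℝ} (hS : S.IsHermitian)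
    (x y : Fin d → ℝ) : x ⬝ᵥ (S *ᵥ y) = (S *ᵥ x) ⬝ᵥ y := by
  rw [Matrix.dotProduct_mulVec, ← Matrix.mulVec_transpose, herm_transpose hS]

lemma dot_mulVec_sum (A : Matrix (Fin d) (Fin d) ℝ) (v : Fin d → ℝ) :
    v ⬝ᵥ A *ᵥ v = ∑ k, ∑ l, v k * (A k l * v l) := by
  simp [dotProduct, Matrix.mulVec, Finset.mul_sum]

lemma sub_conj_diag (W : Matrix (Fin d) (Fin d) ℝ) (f g : Fin d → ℝ) :
    W * diagonal f * star W - W * diagonal g * star W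
      = W * diagonal (fun j => f j - g j) * star W := by
  rw [← Matrix.sub_mul, ← Matrix.mul_sub, ← Matrix.diagonal_sub]

lemma aesm_pow {Ω : Type*} [MeasurableSpace Ω] (P : Measure Ω)
    (B : Ω → Matrix (Fin d) (Fin d) ℝ)
    (h : ∀ k l, AEStronglyMeasurable (fun ω => B ω k l) P) (n : ℕ) :
    ∀ k l, AEStronglyMeasurable (fun ω => (B ω ^ n) k l) P := by
  induction n with
  | zero => intro k l; simp only [pow_zero]; exact aestronglyMeasurable_const
  | succ n ih =>
      intro k l
      have : (fun ω => (B ω ^ (n+1)) k l)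
          = fun ω => ∑ m, (B ω ^ n) k m * B ω m l := by
        funext ω; rw [pow_succ, Matrix.mul_apply]
      rw [this]
      exact Finset.aestronglyMeasurable_fun_sum _ fun m _ => (ih k m).mul (h m l)


lemma sqrt_entry_approx {B : Matrix (Fin d) (Fin d) ℝ} (hB : B.PosSemidef) {R ε : ℝ}
    (heig : ∀ j, hB.1.eigenvalues j ∈ Set.Icc 0 R) {p : Polynomial ℝ}
    (hp : ∀ x ∈ Set.Icc (0:ℝ) R, |p.eval x - Real.sqrt x| ≤ ε) (k l : Fin d) :
    |(evalMat p B) k l - hB.sqrt k l| ≤ ε := by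
  have hW1 : (hB.1.eigenvectorUnitary : Matrix (Fin d) (Fin d) ℝ) *
      star (hB.1.eigenvectorUnitary : Matrix (Fin d) (Fin d) ℝ) = 1 := unit_mul_star hB.1
  have hW2 := star_mul_unit hB.1
  have e1 : evalMat p B = (hB.1.eigenvectorUnitary : Matrix (Fin d) (Fin d) ℝ) *
      diagonal (fun j => p.eval (hB.1.eigenvalues j)) *
      star (hB.1.eigenvectorUnitary : Matrix (Fin d) (Fin d) ℝ) := by
    conv_lhs => rw [spectral_real hB.1]
    exact evalMat_conj hW1 hW2 _ p
  rw [e1, sqrt_spectral hB, ← Matrix.sub_apply, sub_conj_diag]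
  exact entry_bound hW1 (fun j => hp _ (heig j)) k l

lemma sqrt_entry_bound {B : Matrix (Fin d) (Fin d) ℝ} (hB : B.PosSemidef) {R : ℝ}
    (heig : ∀ j, hB.1.eigenvalues j ∈ Set.Icc 0 R) (k l : Fin d) :
    |hB.sqrt k l| ≤ Real.sqrt R := by
  rw [sqrt_spectral hB]
  refine entry_bound (unit_mul_star hB.1) (fun j => ?_) k l
  rw [abs_of_nonneg (Real.sqrt_nonneg _)]
  exact Real.sqrt_le_sqrt (heig j).2

lemma msqrt_eq {A : Matrix (Fin d) (Fin d) ℝ} (h : A.PosSemidef) : msqrt A = h.sqrt := by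
  unfold msqrt
  rw [dif_pos h]
  have hinst : (fun a b => Classical.propDecidable (a = b) : DecidableEq (Fin d))
      = instDecidableEqFin d := Subsingleton.elim _ _
  rw [hinst]
  rfl


lemma sqrt_mulVec_eigen {A : Matrix (Fin d) (Fin d) ℝ} (hA : A.PosSemidef) (j : Fin d) :
    hA.sqrt *ᵥ ⇑(hA.1.eigenvectorBasis j)
      = Real.sqrt (hA.1.eigenvalues j) • ⇑(hA.1.eigenvectorBasis j) := by
  have hps := Pi.single_smul (f := fun _ : Fin d => ℝ) j
    (Real.sqrt (hA.1.eigenvalues j)) (1 : ℝ)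
  rw [smul_eq_mul, mul_one] at hps
  rw [sqrt_spectral hA, ← Matrix.mulVec_mulVec, ← Matrix.mulVec_mulVec,
    Matrix.IsHermitian.star_eigenvectorUnitary_mulVec, Matrix.diagonal_mulVec_single,
    mul_one, hps, Matrix.mulVec_smul, Matrix.IsHermitian.eigenvectorUnitary_mulVec]

lemma qf_smul_one_sub (c : ℝ) (A : Matrix (Fin d) (Fin d) ℝ) (x : Fin d → ℝ) :
    x ⬝ᵥ ((c • 1 - A : Matrix (Fin d) (Fin d) ℝ) *ᵥ x) = c * (x ⬝ᵥ x) - x ⬝ᵥ A *ᵥ x := by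
  rw [Matrix.sub_mulVec, Matrix.smul_mulVec, Matrix.one_mulVec, dotProduct_sub,
    dotProduct_smul, smul_eq_mul]

lemma qf_sub_smul_one (A : Matrix (Fin d) (Fin d) ℝ) (c : ℝ) (x : Fin d → ℝ) :
    x ⬝ᵥ ((A - c • 1 : Matrix (Fin d) (Fin d) ℝ) *ᵥ x) = x ⬝ᵥ A *ᵥ x - c * (x ⬝ᵥ x) := by
  rw [Matrix.sub_mulVec, Matrix.smul_mulVec, Matrix.one_mulVec, dotProduct_sub,
    dotProduct_smul, smul_eq_mul]


end Helpers

/-- If `γ⁻¹ I ⪯ Q ⪯ γ I` almost surely and `Q*` is a positive definite solution of the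
Bures–Wasserstein fixed-point equation `Q* = E[(Q*^{1/2} Q Q*^{1/2})^{1/2}]`, then
`γ⁻¹ I ⪯ Q* ⪯ γ I`. -/
theorem stmt17 {d : ℕ} (γ : ℝ) (hγ : 1 ≤ γ)
    {Ω : Type*} [MeasurableSpace Ω] (P : Measure Ω) [IsProbabilityMeasure P]
    (Q : Ω → Matrix (Fin d) (Fin d) ℝ)
    (hint : ∀ k l, Integrable (fun ω => Q ω k l) P)
    (hbdd : ∀ᵐ ω ∂P, (Q ω - γ⁻¹ • 1).PosSemidef ∧ ((γ • 1 : Matrix (Fin d) (Fin d) ℝ) - Q ω).PosSemidef)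
    (Qstar : Matrix (Fin d) (Fin d) ℝ) (hQstar : Qstar.PosDef)
    (hfix : Qstar = Matrix.of fun k l => ∫ ω, msqrt (msqrt Qstar * Q ω * msqrt Qstar) k l ∂P) :
    (Qstar - γ⁻¹ • 1).PosSemidef ∧ ((γ • 1 : Matrix (Fin d) (Fin d) ℝ) - Qstar).PosSemidef := by
  rcases Nat.eq_zero_or_pos d with hd | hd
  · subst hd
    constructor <;>
      exact Matrix.PosSemidef.of_dotProduct_mulVec_nonneg (by ext i j; exact i.elim0)
        fun x => by simp [dotProduct]
  haveI : Nonempty (Fin d) := ⟨⟨0, hd⟩⟩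
  have hγ0 : (0:ℝ) < γ := lt_of_lt_of_le one_pos hγ
  have hγi : (0:ℝ) < γ⁻¹ := inv_pos.mpr hγ0
  have hQs : Qstar.PosSemidef := hQstar.posSemidef
  set S : Matrix (Fin d) (Fin d) ℝ := hQs.sqrt with hSdef
  have hSps : S.PosSemidef := hQs.posSemidef_sqrt
  have hSh : S.IsHermitian := hSps.1
  have hSS : S * S = Qstar := hQs.sqrt_mul_self
  have hmsq : msqrt Qstar = S := msqrt_eq hQs
  rw [hmsq] at hfix
  set M : Ω → Matrix (Fin d) (Fin d) ℝ := fun ω => msqrt (S * Q ω * S) with hMdef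
  have hfix' : ∀ k l, Qstar k l = ∫ ω, M ω k l ∂P := by
    intro k l
    conv_lhs => rw [hfix]
    rfl
  -- eigenvalues of Qstar
  have ht := fun j => hQs.1.eigenvalues j
  have htpos : ∀ j, 0 < hQs.1.eigenvalues j := fun j => hQstar.eigenvalues_pos j
  -- upper bound on Qstar's eigenvalues
  set c0 : ℝ := Finset.univ.sup' Finset.univ_nonempty hQs.1.eigenvalues with hc0def
  have hc0 : ∀ j, hQs.1.eigenvalues j ≤ c0 := fun j =>
    Finset.le_sup' _ (Finset.mem_univ j)
  have hc0pos : 0 < c0 := lt_of_lt_of_le (htpos (Classical.arbitrary _)) (hc0 _)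
  have hQle : ((c0 • 1 : Matrix (Fin d) (Fin d) ℝ) - Qstar).PosSemidef :=
    diagRep_upper hQs.1 hc0
  set R : ℝ := γ * c0 with hRdef
  have hRpos : 0 < R := mul_pos hγ0 hc0pos
  -- a.e. bundle of facts
  have hgood : ∀ᵐ ω ∂P, (S * Q ω * S).PosSemidef ∧
      (∀ x : Fin d → ℝ, x ⬝ᵥ (S * Q ω * S) *ᵥ x ≤ γ * (x ⬝ᵥ Qstar *ᵥ x)) ∧
      (∀ x : Fin d → ℝ, γ⁻¹ * (x ⬝ᵥ Qstar *ᵥ x) ≤ x ⬝ᵥ (S * Q ω * S) *ᵥ x) := by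
    filter_upwards [hbdd] with ω hω
    obtain ⟨h1, h2⟩ := hω
    have hQps : (Q ω).PosSemidef := by
      have := h1.add (smul_one_posSemidef (le_of_lt hγi))
      simpa using this
    have hqf : ∀ x : Fin d → ℝ, x ⬝ᵥ (S * Q ω * S) *ᵥ x
        = (S *ᵥ x) ⬝ᵥ Q ω *ᵥ (S *ᵥ x) := by
      intro x
      rw [← Matrix.mulVec_mulVec, ← Matrix.mulVec_mulVec, dot_symm_assoc hSh]
    have hSxx : ∀ x : Fin d → ℝ, (S *ᵥ x) ⬝ᵥ (S *ᵥ x) = x ⬝ᵥ Qstar *ᵥ x := by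
      intro x
      rw [← dot_symm_assoc hSh, Matrix.mulVec_mulVec, hSS]
    refine ⟨?_, ?_, ?_⟩
    · have := hQps.mul_mul_conjTranspose_same S
      rwa [hSh.eq] at this
    · intro x
      have h2x := qf_nonneg h2 (S *ᵥ x)
      rw [qf_smul_one_sub, hSxx x] at h2x
      rw [hqf x]
      linarith
    · intro x
      have h1x := qf_nonneg h1 (S *ᵥ x)
      rw [qf_sub_smul_one, hSxx x] at h1x
      rw [hqf x]
      linarith
  -- polynomial approximations of sqrt on [0, R]
  have hex : ∀ n : ℕ, ∃ p : Polynomial ℝ,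
      ∀ x ∈ Set.Icc (0:ℝ) R, |p.eval x - Real.sqrt x| < 1/(n+1) := fun n =>
    exists_polynomial_near_of_continuousOn 0 R Real.sqrt
      Real.continuous_sqrt.continuousOn _ (by positivity)
  choose pseq hpseq using hex
  -- eigenvalues of S * Q ω * S lie in [0, R] for good ω
  have heigN : ∀ ω, (S * Q ω * S).PosSemidef →
      (∀ x : Fin d → ℝ, x ⬝ᵥ (S * Q ω * S) *ᵥ x ≤ γ * (x ⬝ᵥ Qstar *ᵥ x)) →
      ∀ (hN : (S * Q ω * S).PosSemidef) j, hN.1.eigenvalues j ∈ Set.Icc 0 R := by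
    intro ω hN hup hN' j
    refine ⟨hN'.eigenvalues_nonneg j, ?_⟩
    refine eig_le_of_loewner hN'.1 ?_ j
    refine posSemidef_of_qf ((smul_one_posSemidef (le_of_lt hRpos)).1.sub hN'.1) ?_
    intro x
    rw [qf_smul_one_sub]
    have hq1 : x ⬝ᵥ Qstar *ᵥ x ≤ c0 * (x ⬝ᵥ x) := by
      have := qf_nonneg hQle x
      rw [qf_smul_one_sub] at this
      linarith
    have := hup x
    have hRx : γ * (x ⬝ᵥ Qstar *ᵥ x) ≤ R * (x ⬝ᵥ x) := by
      rw [hRdef, mul_assoc]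
      exact mul_le_mul_of_nonneg_left hq1 (le_of_lt hγ0)
    linarith
  -- measurability of the entries of M
  have hNmeas : ∀ k l, AEStronglyMeasurable (fun ω => (S * Q ω * S) k l) P := by
    intro k l
    have he : (fun ω => (S * Q ω * S) k l)
        = fun ω => ∑ m', (∑ m, S k m * Q ω m m') * S m' l := by
      funext ω
      rw [Matrix.mul_apply]
      exact Finset.sum_congr rfl fun m' _ => by rw [Matrix.mul_apply]
    rw [he]
    refine Finset.aestronglyMeasurable_fun_sum _ fun m' _ => ?_
    exact (Finset.aestronglyMeasurable_fun_sum _ fun m _ =>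
      ((hint m m').aestronglyMeasurable.const_mul _)).mul_const _
  have hMasm : ∀ k l, AEStronglyMeasurable (fun ω => M ω k l) P := by
    intro k l
    refine aestronglyMeasurable_of_tendsto_ae (u := Filter.atTop)
      (f := fun n ω => (evalMat (pseq n) (S * Q ω * S)) k l) (fun n => ?_) ?_
    · have he : (fun ω => (evalMat (pseq n) (S * Q ω * S)) k l)
          = fun ω => ∑ i ∈ Finset.range ((pseq n).natDegree + 1),
              (pseq n).coeff i * ((S * Q ω * S) ^ i) k l := by
        funext ω
        rw [evalMat, Matrix.sum_apply]
        exact Finset.sum_congr rfl fun i _ => by rw [Matrix.smul_apply, smul_eq_mul]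
      have hs : AEStronglyMeasurable
          (fun ω => ∑ i ∈ Finset.range ((pseq n).natDegree + 1),
            (pseq n).coeff i * ((S * Q ω * S) ^ i) k l) P :=
        Finset.aestronglyMeasurable_fun_sum _ fun i _ =>
          ((aesm_pow P _ hNmeas i k l).const_mul _)
      rw [← he] at hs
      exact hs
    · filter_upwards [hgood] with ω hω
      obtain ⟨hN, hup, _⟩ := hω
      have hMeq : M ω k l = hN.sqrt k l := by rw [hMdef]; simp only; rw [msqrt_eq hN]
      have hb : ∀ n : ℕ, |evalMat (pseq n) (S * Q ω * S) k l - M ω k l| ≤ 1/(n+1) := by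
        intro n
        rw [hMeq]
        exact sqrt_entry_approx hN (heigN ω hN hup hN) (fun x hx => le_of_lt (hpseq n x hx)) k l
      rw [tendsto_iff_dist_tendsto_zero]
      refine squeeze_zero (fun n => dist_nonneg) (fun n => ?_)
        tendsto_one_div_add_atTop_nhds_zero_nat
      rw [Real.dist_eq]
      exact hb n
  have hMbd : ∀ᵐ ω ∂P, ∀ k l, |M ω k l| ≤ Real.sqrt R := by
    filter_upwards [hgood] with ω hω
    obtain ⟨hN, hup, _⟩ := hω
    intro k l
    have hMeq : M ω k l = hN.sqrt k l := by rw [hMdef]; simp only; rw [msqrt_eq hN]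
    rw [hMeq]
    exact sqrt_entry_bound hN (heigN ω hN hup hN) k l
  have hMint : ∀ k l, Integrable (fun ω => M ω k l) P := by
    intro k l
    refine Integrable.mono' (integrable_const (Real.sqrt R)) (hMasm k l) ?_
    filter_upwards [hMbd] with ω h
    rw [Real.norm_eq_abs]
    exact h k l
  -- integral identity for quadratic forms
  have hquadint : ∀ v : Fin d → ℝ, Integrable (fun ω => v ⬝ᵥ (M ω) *ᵥ v) P := by
    intro v
    have he : (fun ω => v ⬝ᵥ M ω *ᵥ v)
        = fun ω => ∑ k, ∑ l, v k * (M ω k l * v l) := funext fun ω => dot_mulVec_sum _ _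
    rw [he]
    exact integrable_finset_sum _ fun k _ => integrable_finset_sum _ fun l _ =>
      (((hMint k l).mul_const (v l)).const_mul (v k))
  have hquad : ∀ v : Fin d → ℝ, v ⬝ᵥ Qstar *ᵥ v = ∫ ω, v ⬝ᵥ (M ω) *ᵥ v ∂P := by
    intro v
    have he : (fun ω => v ⬝ᵥ M ω *ᵥ v)
        = fun ω => ∑ k, ∑ l, v k * (M ω k l * v l) := funext fun ω => dot_mulVec_sum _ _
    rw [he, integral_finset_sum _ (fun k _ => integrable_finset_sum _ fun l _ =>
      (((hMint k l).mul_const (v l)).const_mul (v k))), dot_mulVec_sum Qstar v]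
    refine Finset.sum_congr rfl fun k _ => ?_
    rw [integral_finset_sum _ (fun l _ => (((hMint k l).mul_const (v l)).const_mul (v k)))]
    refine Finset.sum_congr rfl fun l _ => ?_
    rw [MeasureTheory.integral_const_mul, MeasureTheory.integral_mul_const, hfix' k l]
  -- upper bound on the eigenvalues of Qstar
  have hup : ∀ j, hQs.1.eigenvalues j ≤ γ := by
    intro j
    set v : Fin d → ℝ := ⇑(hQs.1.eigenvectorBasis j) with hvdef
    set t : ℝ := hQs.1.eigenvalues j with htdef
    have hvv : v ⬝ᵥ v = 1 := basis_dot_self hQs.1 j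
    have htq : t = v ⬝ᵥ Qstar *ᵥ v := eigenvalue_qf hQs.1 j
    have hpt : ∀ᵐ ω ∂P, v ⬝ᵥ (M ω) *ᵥ v ≤ Real.sqrt (γ * t) := by
      filter_upwards [hgood] with ω hω
      obtain ⟨hN, hub, _⟩ := hω
      have hMeq : M ω = hN.sqrt := by rw [hMdef]; simp only; rw [msqrt_eq hN]
      set u : ℝ := v ⬝ᵥ (M ω) *ᵥ v with hudef
      have hu0 : 0 ≤ u := by
        rw [hudef, hMeq]
        exact qf_nonneg hN.posSemidef_sqrt v
      have hMh : (M ω).IsHermitian := by rw [hMeq]; exact hN.posSemidef_sqrt.1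
      have hcs : u ^ 2 ≤ (∑ i, v i ^ 2) * (∑ i, ((M ω *ᵥ v) i) ^ 2) :=
        Finset.sum_mul_sq_le_sq_mul_sq Finset.univ v (M ω *ᵥ v)
      have hv2 : (∑ i, v i ^ 2) = 1 := by
        rw [← hvv, dotProduct]
        exact Finset.sum_congr rfl fun i _ => pow_two _
      have hw2 : (∑ i, ((M ω *ᵥ v) i) ^ 2) = v ⬝ᵥ (S * Q ω * S) *ᵥ v := by
        have e1 : (∑ i, ((M ω *ᵥ v) i) ^ 2) = (M ω *ᵥ v) ⬝ᵥ (M ω *ᵥ v) :=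
          Finset.sum_congr rfl fun i _ => (pow_two _)
        rw [e1, ← dot_symm_assoc hMh, Matrix.mulVec_mulVec, hMeq, hN.sqrt_mul_self]
      have hNb : v ⬝ᵥ (S * Q ω * S) *ᵥ v ≤ γ * t := by
        have := hub v
        rw [← htq] at this
        exact this
      have hu2 : u ^ 2 ≤ γ * t := by
        rw [hv2, hw2, one_mul] at hcs
        linarith
      calc u = Real.sqrt (u ^ 2) := (Real.sqrt_sq hu0).symm
        _ ≤ Real.sqrt (γ * t) := Real.sqrt_le_sqrt hu2
    have hint1 : t ≤ Real.sqrt (γ * t) := by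
      have := integral_mono_ae (hquadint v) (integrable_const _) hpt
      rw [← hquad v, ← htq] at this
      simpa using this
    have ht0 : 0 < t := htpos j
    have hsq : t ^ 2 ≤ γ * t := by
      have h1 : t ^ 2 ≤ Real.sqrt (γ * t) ^ 2 := by
        have := pow_le_pow_left₀ (le_of_lt ht0) hint1 2
        exact this
      rwa [Real.sq_sqrt (by positivity)] at h1
    nlinarith
  -- lower bound via the smallest eigenvalue
  obtain ⟨jm, -, hjm⟩ := Finset.exists_min_image (Finset.univ : Finset (Fin d))
    hQs.1.eigenvalues ⟨Classical.arbitrary _, Finset.mem_univ _⟩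
  set μ : ℝ := hQs.1.eigenvalues jm with hμdef
  have hμpos : 0 < μ := htpos jm
  have hQge : (Qstar - μ • 1).PosSemidef :=
    diagRep_lower hQs.1 (fun j => hjm j (Finset.mem_univ j))
  have hlow : γ⁻¹ ≤ μ := by
    set v : Fin d → ℝ := ⇑(hQs.1.eigenvectorBasis jm) with hvdef
    have hvv : v ⬝ᵥ v = 1 := basis_dot_self hQs.1 jm
    have htq : μ = v ⬝ᵥ Qstar *ᵥ v := eigenvalue_qf hQs.1 jm
    have hpt : ∀ᵐ ω ∂P, Real.sqrt (γ⁻¹ * μ) ≤ v ⬝ᵥ (M ω) *ᵥ v := by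
      filter_upwards [hgood] with ω hω
      obtain ⟨hN, -, hlb⟩ := hω
      have hMeq : M ω = hN.sqrt := by rw [hMdef]; simp only; rw [msqrt_eq hN]
      have hNge : ((S * Q ω * S) - (γ⁻¹ * μ) • 1).PosSemidef := by
        refine posSemidef_of_qf (hN.1.sub (smul_one_posSemidef
          (le_of_lt (mul_pos hγi hμpos))).1) ?_
        intro x
        rw [qf_sub_smul_one]
        have h1 := hlb x
        have h2 : μ * (x ⬝ᵥ x) ≤ x ⬝ᵥ Qstar *ᵥ x := by
          have := qf_nonneg hQge x
          rw [qf_sub_smul_one] at this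
          linarith
        have h3 : γ⁻¹ * (μ * (x ⬝ᵥ x)) ≤ γ⁻¹ * (x ⬝ᵥ Qstar *ᵥ x) :=
          mul_le_mul_of_nonneg_left h2 (le_of_lt hγi)
        rw [← mul_assoc] at h3
        linarith
      have hs := sqrt_loewner hN hNge
      have := qf_nonneg hs v
      rw [qf_sub_smul_one, hvv, mul_one, ← hMeq] at this
      linarith
    have hint1 : Real.sqrt (γ⁻¹ * μ) ≤ μ := by
      have := integral_mono_ae (integrable_const _) (hquadint v) hpt
      rw [← hquad v, ← htq] at this
      simpa using this
    have hsq : γ⁻¹ * μ ≤ μ ^ 2 := by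
      have h1 : Real.sqrt (γ⁻¹ * μ) ^ 2 ≤ μ ^ 2 :=
        pow_le_pow_left₀ (Real.sqrt_nonneg _) hint1 2
      rwa [Real.sq_sqrt (by positivity)] at h1
    nlinarith
  exact ⟨diagRep_lower hQs.1 (fun j => le_trans hlow (hjm j (Finset.mem_univ j))),
    diagRep_upper hQs.1 hup⟩

end BWFR
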